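/- Let d and g be real numbers with d ≥ 10 and 0 ≤ g ≤ d(d−3)/6 + 1. Then the Cayley number C(d,g) satisfies C(d,g) ≥ d(d−3)(d−6)(d−9)/72 > 0. -/
import Mathlib

/-- The Cayley number of 4-secants of a space curve of degree `d` and genus `g`. -/
noncomputable def cayley (d g : ℝ) : ℝ :=
  (d - 2) * (d - 3) ^ 2 * (d - 4) / 12 - g * (d ^ 2 - 7 * d + 13 - g) / 2

/-- Proposition 4.1 (numerical part): if `d ≥ 10` and `0 ≤ g ≤ d(d−3)/6 + 1`, then
`C(d,g) ≥ d(d−3)(d−6)(d−9)/72 > 0`. -/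
theorem stmt15 (d g : ℝ) (hd : 10 ≤ d) (hg0 : 0 ≤ g)
    (hg : g ≤ d * (d - 3) / 6 + 1) :
    d * (d - 3) * (d - 6) * (d - 9) / 72 ≤ cayley d g ∧
    0 < d * (d - 3) * (d - 6) * (d - 9) / 72 := by
  constructor
  · unfold cayley
    have h1 : 0 ≤ d * (d - 3) / 6 + 1 - g := by linarith
    have h2 : 0 ≤ (d ^ 2 - 7 * d + 13) - (d * (d - 3) / 6 + 1) - g := by nlinarith [sq_nonneg (d-6), sq_nonneg d, mul_pos (mul_pos (by linarith : (0:ℝ) < d) (by linarith : (0:ℝ) < d-3)) (mul_pos (by linarith : (0:ℝ) < d-6) (by linarith : (0:ℝ) < d-9))]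
    nlinarith [mul_nonneg h1 h2]
  · have : 0 < d * (d - 3) * (d - 6) * (d - 9) := by nlinarith [sq_nonneg (d-6), sq_nonneg d, mul_pos (mul_pos (by linarith : (0:ℝ) < d) (by linarith : (0:ℝ) < d-3)) (mul_pos (by linarith : (0:ℝ) < d-6) (by linarith : (0:ℝ) < d-9))]
    linarith
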